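/- Let A be an ω-homogeneous structure in a countable signature whose finitely generated substructures are finite, and let ≺ be a linear ordering on A such that (A,≺) is also ω-homogeneous. Set H = Aut(A). If Age(A,≺) satisfies both the Ramsey property and the ordering property, then the orbit closure cl(H·≺) ⊆ LO(A) is the universal minimal flow of H: it is a minimal H-flow, and every minimal H-flow is a continuous H-equivariant image of it. -/

import Mathlib

open FirstOrder FirstOrder.Language Topology

universe u v w x

/-- The compact space of all (strict) linear orderings on `α`, viewed as a subspace of the
product space `Bool ^ (α × α)` (with `Bool` discrete). -/
abbrev LO (α : Type w) : Type w :=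
  {r : α → α → Bool // IsStrictTotalOrder α (fun a b => r a b = true)}

/-- The natural action of a bijection on the space of linear orderings:
`a (g • r) b ↔ g⁻¹ a <_r g⁻¹ b`. -/
def permLO {α : Type w} (g : Equiv.Perm α) (r : LO α) : LO α :=
  ⟨fun a b => r.1 (g.symm a) (g.symm b), by
    haveI := r.2
    exact
      { trichotomous := fun a b h1 h2 => by
          rcases trichotomous_of (fun x y => r.1 x y = true) (g.symm a) (g.symm b) with h | h | h
          · exact (h1 h).elim
          · exact g.symm.injective h
          · exact (h2 h).elim
        irrefl := fun a => irrefl_of (fun x y => r.1 x y = true) (g.symm a)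
        trans := fun a b c hab hbc => trans_of (fun x y => r.1 x y = true) hab hbc }⟩

variable {L : FirstOrder.Language.{u, v}} {M : Type w} [L.Structure M]

/-- The automorphism group of a first-order structure. -/
instance autGroup : Group (M ≃[L] M) where
  mul f g := f.comp g
  one := Language.Equiv.refl L M
  inv f := f.symm
  mul_assoc _ _ _ := rfl
  one_mul := Language.Equiv.refl_comp
  mul_one := Language.Equiv.comp_refl
  inv_mul_cancel := Language.Equiv.symm_comp_self

/-- The topology of pointwise convergence on the automorphism group of a structure. -/
instance autTopology : TopologicalSpace (M ≃[L] M) :=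
  letI : TopologicalSpace M := ⊥
  TopologicalSpace.induced
    (fun g : M ≃[L] M => ((g : M → M), (g.symm : M → M))) inferInstance

/-- The orbit of a linear ordering under the full automorphism group `H = Aut(M)`. -/
def fullOrbitLO (L : FirstOrder.Language.{u, v}) (M : Type w) [L.Structure M] (r : LO M) :
    Set (LO M) :=
  Set.range fun g : M ≃[L] M => permLO g.toEquiv r

/-- The linearly ordered structure `(M, ≺)` is `ω`-homogeneous. -/
def OrdUltrahomogeneous (L : FirstOrder.Language.{u, v}) (M : Type w) [L.Structure M]
    (prec : LO M) : Prop :=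
  ∀ (S : L.Substructure M), S.FG → ∀ e : S ↪[L] M,
    (∀ x y : S, prec.1 x y = true ↔ prec.1 (e x) (e y) = true) →
    ∃ g : M ≃[L] M, (∀ a b : M, prec.1 (g a) (g b) = prec.1 a b) ∧ ∀ x : S, g x = e x

/-- `S'` is a copy of `S` in `(M, ≺)`. -/
def OrdIsoCopy (L : FirstOrder.Language.{u, v}) (M : Type w) [L.Structure M] (prec : LO M)
    (S S' : L.Substructure M) : Prop :=
  ∃ φ : S ≃[L] S', ∀ x y : S, prec.1 x y = true ↔ prec.1 (φ x) (φ y) = true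

/-- The age of `(M, ≺)` satisfies the Ramsey property. -/
def OrderedAgeRamsey (L : FirstOrder.Language.{u, v}) (M : Type w) [L.Structure M]
    (prec : LO M) : Prop :=
  ∀ S T : L.Substructure M, S.FG → T.FG →
    (∃ e : S ↪[L] T, ∀ x y : S, prec.1 x y = true ↔ prec.1 (e x) (e y) = true) →
    ∀ k : ℕ, 2 ≤ k → ∃ C : L.Substructure M, C.FG ∧
      ∀ c : L.Substructure M → Fin k,
        ∃ T' : L.Substructure M, T' ≤ C ∧ OrdIsoCopy L M prec T T' ∧
          ∃ i : Fin k, ∀ S' : L.Substructure M, S' ≤ T' → OrdIsoCopy L M prec S S' → c S' = i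

/-- The ordered structure `(S, r)` belongs to the age of `(M, ≺)`. -/
def InOrderedAge (L : FirstOrder.Language.{u, v}) (M : Type w) [L.Structure M] (prec : LO M)
    (S : L.Substructure M) (r : S → S → Bool) : Prop :=
  ∃ e : S ↪[L] M, ∀ x y : S, (r x y = true ↔ prec.1 (e x) (e y) = true)

/-- The age of `(M, ≺)` satisfies the ordering property. -/
def OrderingProperty (L : FirstOrder.Language.{u, v}) (M : Type w) [L.Structure M]
    (prec : LO M) : Prop :=
  ∀ S : L.Substructure M, S.FG → ∃ T : L.Substructure M, T.FG ∧
    ∀ (r : S → S → Bool) (r' : T → T → Bool),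
      IsStrictTotalOrder S (fun x y => r x y = true) →
      IsStrictTotalOrder T (fun x y => r' x y = true) →
      InOrderedAge L M prec S r → InOrderedAge L M prec T r' →
      ∃ e : S ↪[L] T, ∀ x y : S, (r x y = true ↔ r' (e x) (e y) = true)

/-!
The Ramsey property of the age of `(A, ≺)` makes the stabilizer `G` of `≺` extremely amenable.
Given finitely many `g ∈ G`, an entourage `V` of a compact `H`-flow `Y` and `y ∈ Y`, take a finite
`S ⊆ A` whose pointwise stabilizer moves points of `Y` by less than `V`, and colour each copy
`w(S)`, `w ∈ G`, by a point of a finite `V`-net near `w⁻¹ • y` (well defined up to `V`, since a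
finite linear order has no nontrivial automorphism). A monochromatic copy of the substructure
generated by the `g⁻¹(S)` gives a point that every `g` moves only a little, and compactness turns
these almost fixed points into a `G`-fixed point `y₀`. By `ω`-homogeneity of `(A, ≺)`, if `g • ≺`
and `h • ≺` agree on `S` then `g • y₀` and `h • y₀` differ by an element fixing `S` pointwise, so
`g • ≺ ↦ g • y₀` is uniformly continuous and extends to the orbit closure; its image is closed and
invariant, hence all of a minimal `Y`. Minimality of the orbit closure is the ordering property:
an ordering `<` in it restricts on a finite `T` to an ordering from the age, into which `(S, ≺)`
embeds, so `≺` lies in the orbit closure of `<`.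
-/

open Set Filter Uniformity SetRel MulAction

section Relations

variable {α : Type*}

theorem nhds_hasBasis_finset_agree (f : α → α → Bool) :
    (𝓝 f).HasBasis (fun _ : Finset α => True)
      fun F => {g | ∀ a ∈ F, ∀ b ∈ F, g a b = f a b} := by
  classical
  refine ⟨fun t => ⟨fun ht => ?_, fun ⟨F, _, hF⟩ => mem_of_superset ?_ hF⟩⟩
  · rw [nhds_pi, Filter.mem_pi] at ht
    obtain ⟨I, hI, u, hu, hIu⟩ := ht
    have hJ (a : α) :
        ∃ J : Set α, J.Finite ∧ ∀ g : α → Bool, (∀ b ∈ J, g b = f a b) → g ∈ u a := by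
      simpa only [nhds_pi, nhds_discrete, mem_pi_pure] using hu a
    choose J hJ hJu using hJ
    refine ⟨hI.toFinset ∪ hI.toFinset.biUnion fun a => (hJ a).toFinset, trivial,
      fun g hg => hIu fun a ha => ?_⟩
    have ha' : a ∈ hI.toFinset := hI.mem_toFinset.2 ha
    exact hJu a _ fun b hb => hg a (Finset.mem_union_left _ ha') b
      (Finset.mem_union_right _ (Finset.mem_biUnion.2 ⟨a, ha', (hJ a).mem_toFinset.2 hb⟩))
  · simp only [ofPred_forall]
    refine (Finset.iInter_mem_sets _).2 fun a _ => (Finset.iInter_mem_sets _).2 fun b _ => ?_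
    exact (continuous_apply_apply a b).continuousAt.preimage_mem_nhds
      ((isOpen_discrete {f a b}).mem_nhds rfl)

theorem isClosed_setOf_isStrictTotalOrder :
    IsClosed {r : α → α → Bool | IsStrictTotalOrder α (fun a b => r a b = true)} := by
  classical
  refine isClosed_of_closure_subset fun r hr => ?_
  have agree (a b c : α) : ∃ s : α → α → Bool, IsStrictTotalOrder α (fun a b => s a b = true) ∧
      s a b = r a b ∧ s b a = r b a ∧ s a a = r a a ∧ s b c = r b c ∧ s a c = r a c := by
    obtain ⟨s, hs, hsr⟩ :=
      (mem_closure_iff_nhds_basis (nhds_hasBasis_finset_agree r)).1 hr {a, b, c} trivial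
    exact ⟨s, hs, by simp_all⟩
  exact
    { trichotomous := fun a b hab hba => by
        obtain ⟨s, hs, h₁, h₂, -⟩ := agree a b a
        exact hs.trichotomous a b (h₁ ▸ hab) (h₂ ▸ hba)
      irrefl := fun a => by
        obtain ⟨s, hs, -, -, h, -⟩ := agree a a a
        exact h ▸ hs.irrefl a
      trans := fun a b c hab hbc => by
        obtain ⟨s, hs, h₁, -, -, h₂, h₃⟩ := agree a b c
        exact h₃ ▸ hs.trans a b c (h₁ ▸ hab) (h₂ ▸ hbc) }

end Relations

namespace LO

variable {α : Type*}

instance : CompactSpace (LO α) :=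
  isCompact_iff_compactSpace.1 isClosed_setOf_isStrictTotalOrder.isCompact

theorem nhds_hasBasis (x : LO α) :
    (𝓝 x).HasBasis (fun _ : Finset α => True)
      fun F => {r : LO α | ∀ a ∈ F, ∀ b ∈ F, r.1 a b = x.1 a b} := by
  rw [nhds_subtype_eq_comap]
  exact (nhds_hasBasis_finset_agree x.1).comap _

theorem setOf_agree_mem_uniformity (F : Finset α) :
    {p : LO α × LO α | ∀ a ∈ F, ∀ b ∈ F, p.1.1 a b = p.2.1 a b} ∈ 𝓤 (LO α) := by
  simp only [ofPred_forall]
  refine (Finset.iInter_mem_sets _).2 fun a _ => (Finset.iInter_mem_sets _).2 fun b _ => ?_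
  have : UniformContinuous fun r : LO α => r.1 a b :=
    (Pi.uniformContinuous_proj _ b).comp
      ((Pi.uniformContinuous_proj _ a).comp uniformContinuous_subtype_val)
  exact this (DiscreteUniformity.relId_mem_uniformity Bool)

theorem isStrictTotalOrder_restrict (r : LO α) (s : Set α) :
    IsStrictTotalOrder s (fun x y => r.1 x y = true) :=
  haveI := r.2
  (Subrel.relEmbedding (fun a b => r.1 a b = true) (· ∈ s)).isStrictTotalOrder

instance : MulAction (M ≃[L] M) (LO M) where
  smul g r := permLO g.toEquiv r
  one_smul _ := rfl
  mul_smul _ _ _ := rfl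

theorem smul_apply (g : M ≃[L] M) (r : LO M) (a b : M) :
    (g • r).1 a b = r.1 (g.symm a) (g.symm b) := rfl

instance : ContinuousConstSMul (M ≃[L] M) (LO M) where
  continuous_const_smul g := by
    refine Continuous.subtype_mk (continuous_pi fun a => continuous_pi fun b => ?_) _
    exact (continuous_apply_apply _ _).comp continuous_subtype_val

theorem mem_stabilizer_iff {prec : LO M} {g : M ≃[L] M} :
    g ∈ stabilizer (M ≃[L] M) prec ↔ ∀ a b, prec.1 (g a) (g b) = prec.1 a b := by
  rw [MulAction.mem_stabilizer_iff]
  constructor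
  · intro h a b
    have := congrArg (fun r : LO M => r.1 (g a) (g b)) h
    simp only [smul_apply, g.symm_apply_apply] at this
    exact this.symm
  · intro h
    ext a b
    rw [smul_apply, ← h, g.apply_symm_apply, g.apply_symm_apply]

end LO

theorem permLO_toEquiv_eq_smul (g : M ≃[L] M) (r : LO M) : permLO g.toEquiv r = g • r := rfl

theorem fullOrbitLO_eq_orbit (r : LO M) : fullOrbitLO L M r = orbit (M ≃[L] M) r := rfl

theorem closure_orbit_subset_of_mem_closure_orbit {G X : Type*} [Monoid G] [TopologicalSpace X]
    [MulAction G X] [ContinuousConstSMul G X] {x y : X} (h : x ∈ closure (orbit G y)) :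
    closure (orbit G x) ⊆ closure (orbit G y) :=
  closure_minimal (fun _ ⟨g, hg⟩ => hg ▸ smul_closure_orbit_subset g y ⟨x, h, rfl⟩)
    isClosed_closure

theorem OrderingProperty.mem_closure_orbit {prec : LO M} (hop : OrderingProperty L M prec)
    (hhom : L.IsUltrahomogeneous M) (hfin : ∀ S : L.Substructure M, S.FG → Finite S)
    {lt : LO M} (hlt : lt ∈ closure (orbit (M ≃[L] M) prec)) :
    prec ∈ closure (orbit (M ≃[L] M) lt) := by
  rw [mem_closure_iff_nhds_basis (LO.nhds_hasBasis prec)]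
  intro F _
  set S := Substructure.closure L (F : Set M)
  have hS : S.FG := Substructure.fg_closure F.finite_toSet
  obtain ⟨T, hT, hST⟩ := hop S hS
  have hTfin : (T : Set M).Finite := @Set.toFinite _ _ (hfin T hT)
  obtain ⟨_, ⟨g, rfl⟩, hg⟩ :=
    (mem_closure_iff_nhds_basis (LO.nhds_hasBasis lt)).1 hlt hTfin.toFinset trivial
  have hT_age : InOrderedAge L M prec T fun x y => lt.1 x y :=
    ⟨g.symm.toEmbedding.comp T.subtype, fun x y => by
      change lt.1 x y = true ↔ _
      rw [← hg x (hTfin.mem_toFinset.2 x.2) y (hTfin.mem_toFinset.2 y.2)]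
      rfl⟩
  obtain ⟨e, he⟩ := hST (fun x y => prec.1 x y) (fun x y => lt.1 x y)
    (LO.isStrictTotalOrder_restrict prec S) (LO.isStrictTotalOrder_restrict lt T)
    ⟨S.subtype, fun _ _ => Iff.rfl⟩ hT_age
  obtain ⟨g₁, hg₁⟩ := hhom S hS (T.subtype.comp e)
  have hg₁e (x : S) : g₁ x = e x := (DFunLike.congr_fun hg₁ x).symm
  refine ⟨g₁⁻¹ • lt, ⟨g₁⁻¹, rfl⟩, fun a ha b hb => ?_⟩
  have ha' : a ∈ S := Substructure.subset_closure ha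
  have hb' : b ∈ S := Substructure.subset_closure hb
  change lt.1 (g₁ a) (g₁ b) = prec.1 a b
  rw [hg₁e ⟨a, ha'⟩, hg₁e ⟨b, hb'⟩]
  exact Bool.eq_iff_iff.2 (he ⟨a, ha'⟩ ⟨b, hb'⟩).symm

theorem exists_fg_forall_fix_mem_of_mem_nhds_one {U : Set (M ≃[L] M)} (hU : U ∈ 𝓝 1) :
    ∃ S : L.Substructure M, S.FG ∧ ∀ u : M ≃[L] M, (∀ a ∈ S, u a = a) → u ∈ U := by
  -- `autTopology` is induced from the product topology with `M` discrete
  let : TopologicalSpace M := ⊥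
  have : DiscreteTopology M := ⟨rfl⟩
  have hpure (f : M → M) : 𝓝 f = Filter.pi fun a => pure (f a) := by
    rw [nhds_pi]; simp only [nhds_discrete]
  rw [nhds_induced, nhds_prod_eq, hpure, hpure] at hU
  obtain ⟨W, hW, hWU⟩ := hU
  obtain ⟨W₁, hW₁, W₂, hW₂, hW₁₂⟩ := mem_prod_iff.1 hW
  obtain ⟨I₁, hI₁, hI₁W⟩ := mem_pi_pure.1 hW₁
  obtain ⟨I₂, hI₂, hI₂W⟩ := mem_pi_pure.1 hW₂
  refine ⟨Substructure.closure L (I₁ ∪ I₂), Substructure.fg_closure (hI₁.union hI₂),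
    fun u hu => hWU (hW₁₂ ⟨hI₁W _ fun a ha => ?_, hI₂W _ fun a ha => ?_⟩)⟩
  · exact hu a (Substructure.subset_closure (Or.inl ha))
  · have := hu a (Substructure.subset_closure (Or.inr ha))
    change u.symm a = a
    nth_rw 1 [← this]
    exact u.symm_apply_apply a

theorem exists_fg_forall_fix_smul_mem_uniformity {Y : Type*} [UniformSpace Y] [CompactSpace Y]
    [MulAction (M ≃[L] M) Y] [ContinuousSMul (M ≃[L] M) Y] {V : SetRel Y Y} (hV : V ∈ 𝓤 Y) :
    ∃ S : L.Substructure M, S.FG ∧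
      ∀ u : M ≃[L] M, (∀ a ∈ S, u a = a) → ∀ y : Y, (u • y, y) ∈ V := by
  obtain ⟨U, hU, hUV⟩ := isCompact_univ.mem_uniformity_of_prod
    (f := fun (g : M ≃[L] M) (y : Y) => g • y) continuous_smul.continuousOn (mem_univ 1) hV
  rw [nhdsWithin_univ] at hU
  obtain ⟨S, hS, hSU⟩ := exists_fg_forall_fix_mem_of_mem_nhds_one hU
  exact ⟨S, hS, fun u hu y => by simpa using hUV u (hSU u hu) y (mem_univ y)⟩

theorem apply_eq_of_mem_stabilizer_of_mapsTo {prec : LO M} {S : Set M} [Finite S]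
    {u : M ≃[L] M} (hu : u ∈ stabilizer (M ≃[L] M) prec) (huS : MapsTo u S S) :
    ∀ a ∈ S, u a = a := by
  let : LinearOrder S := @linearOrderOfSTO S _ (LO.isStrictTotalOrder_restrict prec S)
    (Classical.decRel _)
  have hmono : StrictMono huS.restrict := fun x y (hxy : prec.1 x y = true) =>
    show prec.1 (u x) (u y) = true by rwa [LO.mem_stabilizer_iff.1 hu]
  exact fun a ha => congrArg Subtype.val (congrFun hmono.eq_id ⟨a, ha⟩)

theorem inv_mul_apply_eq_of_map_eq (hfin : ∀ S : L.Substructure M, S.FG → Finite S)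
    {prec : LO M} {S : L.Substructure M} (hS : S.FG) {u w : M ≃[L] M}
    (hu : u ∈ stabilizer (M ≃[L] M) prec) (hw : w ∈ stabilizer (M ≃[L] M) prec)
    (huw : S.map u.toHom = S.map w.toHom) : ∀ a ∈ S, (u⁻¹ * w) a = a := by
  have := hfin S hS
  refine apply_eq_of_mem_stabilizer_of_mapsTo (mul_mem (inv_mem hu) hw) fun a ha => ?_
  obtain ⟨b, hb, hba⟩ : w a ∈ S.map u.toHom := huw ▸ Substructure.mem_map_of_mem _ ha
  change u.symm (w a) ∈ S
  rw [← hba]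
  simpa using hb

theorem ordIsoCopy_map_of_mem_stabilizer {prec : LO M} (S : L.Substructure M) {w : M ≃[L] M}
    (hw : w ∈ stabilizer (M ≃[L] M) prec) : OrdIsoCopy L M prec S (S.map w.toHom) :=
  ⟨w.toEmbedding.substructureEquivMap S, fun a b => by
    change _ ↔ prec.1 (w a) (w b) = true
    rw [LO.mem_stabilizer_iff.1 hw]⟩

theorem OrderedAgeRamsey.exists_ordIsoCopy_forall_eq {prec : LO M}
    (hramsey : OrderedAgeRamsey L M prec) {κ : Type*} [Finite κ] [Nonempty κ]
    {S T : L.Substructure M} (hS : S.FG) (hT : T.FG)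
    (hST : ∃ e : S ↪[L] T, ∀ x y : S, prec.1 x y = true ↔ prec.1 (e x) (e y) = true)
    (c : L.Substructure M → κ) :
    ∃ T', OrdIsoCopy L M prec T T' ∧ ∃ i, ∀ S' ≤ T', OrdIsoCopy L M prec S S' → c S' = i := by
  obtain ⟨n, ⟨e⟩⟩ := Finite.exists_equiv_fin κ
  set ι : κ → Fin (n + 2) := Fin.castLE (by omega) ∘ e
  have hι : ι.Injective := (Fin.castLE_injective _).comp e.injective
  obtain ⟨C, -, hC⟩ := hramsey S T hS hT hST (n + 2) (by omega)
  obtain ⟨T', -, hT', i, hi⟩ := hC (ι ∘ c)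
  exact ⟨T', hT', Function.invFun ι i, fun S' hS'T' hS' => by
    rw [← hi S' hS'T' hS', Function.comp_apply, Function.leftInverse_invFun hι]⟩

theorem OrderedAgeRamsey.exists_mem_stabilizer_forall_coloring_eq {prec : LO M}
    (hramsey : OrderedAgeRamsey L M prec) (hfin : ∀ S : L.Substructure M, S.FG → Finite S)
    (hohom : OrdUltrahomogeneous L M prec) {κ : Type*} [Finite κ] [Nonempty κ]
    {S : L.Substructure M} (hS : S.FG) {F : Finset (M ≃[L] M)}
    (hF : ∀ g ∈ F, g ∈ stabilizer (M ≃[L] M) prec) (c : L.Substructure M → κ) :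
    ∃ h ∈ stabilizer (M ≃[L] M) prec, ∃ i, ∀ g ∈ F, c (S.map (h * g⁻¹).toHom) = i := by
  have hSfin : (S : Set M).Finite := @Set.toFinite _ _ (hfin S hS)
  set T := Substructure.closure L ((S : Set M) ∪ ⋃ g ∈ F, ⇑g⁻¹ '' S)
  have hT : T.FG := Substructure.fg_closure
    (hSfin.union (F.finite_toSet.biUnion fun g _ => hSfin.image _))
  have hST : S ≤ T := fun a ha => Substructure.subset_closure (Or.inl ha)
  obtain ⟨T', ⟨φ, hφ⟩, i, hi⟩ := hramsey.exists_ordIsoCopy_forall_eq (c := c) hS hT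
    ⟨Substructure.inclusion hST, fun _ _ => Iff.rfl⟩
  obtain ⟨h, hh, hhφ⟩ := hohom T hT (T'.subtype.comp φ.toEmbedding) hφ
  have hh' : h ∈ stabilizer (M ≃[L] M) prec := LO.mem_stabilizer_iff.2 hh
  refine ⟨h, hh', i, fun g hg => hi _ ?_
    (ordIsoCopy_map_of_mem_stabilizer S (mul_mem hh' (inv_mem (hF g hg))))⟩
  rintro _ ⟨a, ha, rfl⟩
  have haT : g⁻¹ a ∈ T := Substructure.subset_closure (Or.inr (mem_biUnion hg ⟨a, ha, rfl⟩))
  change h (g⁻¹ a) ∈ T'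
  rw [hhφ ⟨_, haT⟩]
  exact (φ ⟨_, haT⟩).2

section Flow

variable {Y : Type*} [MulAction (M ≃[L] M) Y]

theorem exists_coloring_smul_inv_near (hfin : ∀ S : L.Substructure M, S.FG → Finite S)
    {prec : LO M} {S : L.Substructure M} (hS : S.FG) {V : SetRel Y Y}
    (hSV : ∀ u : M ≃[L] M, (∀ a ∈ S, u a = a) → ∀ y : Y, (u • y, y) ∈ V)
    {t : Set Y} (ht : ∀ x, ∃ z ∈ t, (x, z) ∈ V) (y : Y) :
    ∃ c : L.Substructure M → t, ∀ w ∈ stabilizer (M ≃[L] M) prec,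
      (w⁻¹ • y, (c (S.map w.toHom) : Y)) ∈ V ○ V := by
  classical
  choose χ hχt hχ using ht
  let rep (S' : L.Substructure M) : M ≃[L] M :=
    if h : ∃ w ∈ stabilizer (M ≃[L] M) prec, S.map w.toHom = S' then h.choose else 1
  refine ⟨fun S' => ⟨χ ((rep S')⁻¹ • y), hχt _⟩,
    fun w hw => ⟨(rep (S.map w.toHom))⁻¹ • y, ?_, hχ _⟩⟩
  have h : ∃ w' ∈ stabilizer (M ≃[L] M) prec, S.map w'.toHom = S.map w.toHom := ⟨w, hw, rfl⟩
  simp only [rep, dif_pos h]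
  obtain ⟨hw', hww'⟩ := h.choose_spec
  have hfix := inv_mul_apply_eq_of_map_eq hfin hS hw hw' hww'.symm
  simpa [mul_smul] using hSV _ hfix (h.choose⁻¹ • y)

variable [UniformSpace Y] [CompactSpace Y] [ContinuousSMul (M ≃[L] M) Y]

theorem exists_forall_smul_mem_uniformity (hfin : ∀ S : L.Substructure M, S.FG → Finite S)
    {prec : LO M} (hohom : OrdUltrahomogeneous L M prec) (hramsey : OrderedAgeRamsey L M prec)
    [Nonempty Y] {F : Finset (M ≃[L] M)} (hF : ∀ g ∈ F, g ∈ stabilizer (M ≃[L] M) prec)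
    {V : SetRel Y Y} (hV : V ∈ 𝓤 Y) :
    ∃ y : Y, ∀ g ∈ F, (g • y, y) ∈ V := by
  classical
  obtain ⟨V₂, hV₂, hV₂_symm, hV₂V⟩ := comp_symm_of_uniformity hV
  obtain ⟨V₁, hV₁, -, hV₁V₂⟩ := comp_symm_of_uniformity hV₂
  obtain ⟨S, hS, hSV₁⟩ := exists_fg_forall_fix_smul_mem_uniformity (L := L) (M := M) hV₁
  obtain ⟨t, ht, hYt⟩ := isCompact_univ.totallyBounded V₁ hV₁
  have hnet (x : Y) : ∃ z ∈ t, (x, z) ∈ V₁ := by simpa using hYt (mem_univ x)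
  obtain ⟨y⟩ := ‹Nonempty Y›
  obtain ⟨c, hc⟩ := exists_coloring_smul_inv_near (prec := prec) hfin hS hSV₁ hnet y
  have : Finite t := ht
  have : Nonempty t := let ⟨z, hz, _⟩ := hnet y; ⟨⟨z, hz⟩⟩
  have hF₁ : ∀ g ∈ insert 1 F, g ∈ stabilizer (M ≃[L] M) prec :=
    Finset.forall_mem_insert _ _ _ |>.2 ⟨one_mem _, hF⟩
  obtain ⟨h, hh, i, hi⟩ := hramsey.exists_mem_stabilizer_forall_coloring_eq hfin hohom hS hF₁ c
  have hnear {g} (hg : g ∈ insert 1 F) : (g • h⁻¹ • y, (i : Y)) ∈ V₂ := by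
    simpa [hi g hg, mul_smul] using hV₁V₂ (hc _ (mul_mem hh (inv_mem (hF₁ g hg))))
  refine ⟨h⁻¹ • y, fun g hg => hV₂V ⟨i, hnear (Finset.mem_insert_of_mem hg), hV₂_symm ?_⟩⟩
  simpa using hnear (Finset.mem_insert_self 1 F)

theorem exists_forall_mem_stabilizer_smul_eq [T0Space Y] [Nonempty Y]
    (hfin : ∀ S : L.Substructure M, S.FG → Finite S) {prec : LO M}
    (hohom : OrdUltrahomogeneous L M prec) (hramsey : OrderedAgeRamsey L M prec) :
    ∃ y₀ : Y, ∀ g ∈ stabilizer (M ≃[L] M) prec, g • y₀ = y₀ := by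
  classical
  let ι := stabilizer (M ≃[L] M) prec × {V : SetRel Y Y // V ∈ 𝓤 Y ∧ IsClosed V}
  let Z (p : ι) : Set Y := {y | ((p.1 : M ≃[L] M) • y, y) ∈ p.2.1}
  have hZ (p : ι) : IsClosed (Z p) :=
    p.2.2.2.preimage ((continuous_const_smul _).prodMk continuous_id)
  obtain ⟨y₀, -, hy₀⟩ := isCompact_univ.inter_iInter_nonempty Z hZ fun u => by
    obtain ⟨y, hy⟩ := exists_forall_smul_mem_uniformity hfin hohom hramsey
      (F := u.image fun p => (p.1 : M ≃[L] M))
      (fun g hg => by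
        obtain ⟨p, -, rfl⟩ := Finset.mem_image.1 hg
        exact p.1.2)
      ((Finset.iInter_mem_sets u).2 fun p _ => p.2.2.1)
    exact ⟨y, mem_univ y, mem_iInter₂.2 fun p hp =>
      mem_iInter₂.1 (hy _ (Finset.mem_image_of_mem _ hp)) p hp⟩
  exact ⟨y₀, fun g hg => eq_of_uniformity_basis uniformity_hasBasis_closed fun hV =>
    mem_iInter.1 hy₀ (⟨g, hg⟩, ⟨_, hV⟩)⟩

theorem exists_forall_agree_smul_mem_uniformity (hfin : ∀ S : L.Substructure M, S.FG → Finite S)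
    {prec : LO M} (hohom : OrdUltrahomogeneous L M prec) {y₀ : Y}
    (hy₀ : ∀ g ∈ stabilizer (M ≃[L] M) prec, g • y₀ = y₀) {V : SetRel Y Y} (hV : V ∈ 𝓤 Y) :
    ∃ F : Finset M, ∀ g h : M ≃[L] M,
      (∀ a ∈ F, ∀ b ∈ F, (g • prec).1 a b = (h • prec).1 a b) → (g • y₀, h • y₀) ∈ V := by
  obtain ⟨S, hS, hSV⟩ := exists_fg_forall_fix_smul_mem_uniformity (L := L) (M := M) hV
  have hSfin : (S : Set M).Finite := @Set.toFinite _ _ (hfin S hS)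
  refine ⟨hSfin.toFinset, fun g h hgh => ?_⟩
  obtain ⟨v, hv, hve⟩ := hohom (S.map h⁻¹.toHom) (hS.map _)
    ((g⁻¹ * h).toEmbedding.comp (Substructure.subtype _)) (by
      rintro ⟨_, a, ha, rfl⟩ ⟨_, b, hb, rfl⟩
      have := hgh a (hSfin.mem_toFinset.2 ha) b (hSfin.mem_toFinset.2 hb)
      change prec.1 (h.symm a) (h.symm b) = true ↔
        prec.1 (g.symm (h (h.symm a))) (g.symm (h (h.symm b))) = true
      simp only [LO.smul_apply] at this
      simp [this])
  have hfix : ∀ a ∈ S, (g * v * h⁻¹) a = a := fun a ha => by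
    have hva : v (h.symm a) = g.symm (h (h.symm a)) := hve ⟨_, a, ha, rfl⟩
    change g (v (h.symm a)) = a
    simp [hva]
  have hv' : v • y₀ = y₀ := hy₀ v (LO.mem_stabilizer_iff.2 hv)
  simpa [mul_smul, hv'] using hSV _ hfix (h • y₀)

theorem exists_uniformContinuous_orbit_map (hfin : ∀ S : L.Substructure M, S.FG → Finite S)
    {prec : LO M} (hohom : OrdUltrahomogeneous L M prec) {y₀ : Y}
    (hy₀ : ∀ g ∈ stabilizer (M ≃[L] M) prec, g • y₀ = y₀) :
    ∃ f : orbit (M ≃[L] M) prec → Y,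
      UniformContinuous f ∧ ∀ g : M ≃[L] M, f ⟨g • prec, g, rfl⟩ = g • y₀ := by
  have hwd {g h : M ≃[L] M} (hgh : g • prec = h • prec) : g • y₀ = h • y₀ := by
    have : h⁻¹ * g ∈ stabilizer (M ≃[L] M) prec := by
      rw [MulAction.mem_stabilizer_iff, mul_smul, hgh, inv_smul_smul]
    calc g • y₀ = h • (h⁻¹ * g) • y₀ := by rw [smul_smul, mul_inv_cancel_left]
      _ = h • y₀ := by rw [hy₀ _ this]
  let f (r : orbit (M ≃[L] M) prec) : Y := r.2.choose • y₀
  have hf (g : M ≃[L] M) : f ⟨g • prec, g, rfl⟩ = g • y₀ :=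
    hwd (Exists.choose_spec (p := fun h : M ≃[L] M => h • prec = g • prec) ⟨g, rfl⟩)
  refine ⟨f, uniformContinuous_def.2 fun V hV => ?_, hf⟩
  obtain ⟨F, hF⟩ := exists_forall_agree_smul_mem_uniformity hfin hohom hy₀ hV
  rw [uniformity_subtype]
  refine mem_of_superset (preimage_mem_comap (LO.setOf_agree_mem_uniformity F)) ?_
  rintro ⟨⟨_, g, rfl⟩, ⟨_, h, rfl⟩⟩ hgh
  simpa only [mem_ofPred_eq, hf] using hF g h hgh

theorem exists_continuous_equivariant_closure_orbit [T0Space Y] [Nonempty Y]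
    (hfin : ∀ S : L.Substructure M, S.FG → Finite S) {prec : LO M}
    (hohom : OrdUltrahomogeneous L M prec) (hramsey : OrderedAgeRamsey L M prec) :
    ∃ φ : closure (orbit (M ≃[L] M) prec) → Y, Continuous φ ∧
      ∀ (g : M ≃[L] M) (r : LO M) (hr : r ∈ closure (orbit (M ≃[L] M) prec))
        (hgr : g • r ∈ closure (orbit (M ≃[L] M) prec)), φ ⟨g • r, hgr⟩ = g • φ ⟨r, hr⟩ := by
  obtain ⟨y₀, hy₀⟩ := exists_forall_mem_stabilizer_smul_eq (Y := Y) hfin hohom hramsey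
  obtain ⟨f, hfu, hf⟩ := exists_uniformContinuous_orbit_map hfin hohom hy₀
  have hsub : orbit (M ≃[L] M) prec ⊆ closure (orbit (M ≃[L] M) prec) := subset_closure
  have he := (isUniformEmbedding_set_inclusion hsub).isUniformInducing
  have hd := (denseRange_inclusion_iff hsub).2 subset_rfl
  set φ := (he.isDenseInducing hd).extend f
  have hφc : Continuous φ := (uniformContinuous_uniformly_extend he hd hfu).continuous
  have hφf (r) : φ (inclusion hsub r) = f r := uniformly_extend_of_ind he hd hfu r
  refine ⟨φ, hφc, fun g r hr hgr => ?_⟩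
  have hg (x : closure (orbit (M ≃[L] M) prec)) : g • x.1 ∈ closure (orbit (M ≃[L] M) prec) :=
    smul_closure_orbit_subset g prec (smul_mem_smul_set x.2)
  have hφg : (fun x => φ ⟨g • x.1, hg x⟩) = fun x => g • φ x := by
    refine hd.equalizer
      (hφc.comp (((continuous_const_smul g).comp continuous_subtype_val).subtype_mk _))
      ((continuous_const_smul g).comp hφc) (funext ?_)
    rintro ⟨_, h, rfl⟩
    simp only [Function.comp_apply, hφf, hf]
    exact (hφf _).trans ((hf (g * h)).trans (mul_smul g h y₀))
  exact congrFun hφg ⟨r, hr⟩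

end Flow

theorem surjective_of_forall_dense_orbit {G X Y : Type*} [Monoid G] [TopologicalSpace X]
    [CompactSpace X] [Nonempty X] [TopologicalSpace Y] [T2Space Y] [MulAction G Y]
    (hmin : ∀ y : Y, Dense (orbit G y)) {φ : X → Y} (hφ : Continuous φ)
    (hinv : ∀ (g : G) (x : X), g • φ x ∈ range φ) : Function.Surjective φ := by
  have : IsMinimal G Y := ⟨hmin⟩
  refine range_eq_univ.1 ((dense_of_nonempty_smul_invariant G (range_nonempty φ) ?_).closure_eq
    ▸ (isCompact_range hφ).isClosed.closure_eq.symm)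
  rintro g _ ⟨_, ⟨x, rfl⟩, rfl⟩
  exact hinv g x

theorem orbit_closure_is_universal_minimal_flow_general
    (hhom : L.IsUltrahomogeneous M)
    (hfin : ∀ S : L.Substructure M, S.FG → Finite S)
    (prec : LO M) (hohom : OrdUltrahomogeneous L M prec)
    (hramsey : OrderedAgeRamsey L M prec) (hop : OrderingProperty L M prec) :
    (∀ lt ∈ closure (fullOrbitLO L M prec),
      closure (fullOrbitLO L M prec) ⊆ closure (fullOrbitLO L M lt)) ∧
    (∀ (Y : Type x) [TopologicalSpace Y] [CompactSpace Y] [T2Space Y] [Nonempty Y]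
        [MulAction (M ≃[L] M) Y] [ContinuousSMul (M ≃[L] M) Y],
      (∀ y : Y, Dense (MulAction.orbit (M ≃[L] M) y)) →
      ∃ φ : closure (fullOrbitLO L M prec) → Y,
        Continuous φ ∧ Function.Surjective φ ∧
        ∀ (g : M ≃[L] M) (r : LO M) (hr : r ∈ closure (fullOrbitLO L M prec))
            (hgr : permLO g.toEquiv r ∈ closure (fullOrbitLO L M prec)),
          φ ⟨permLO g.toEquiv r, hgr⟩ = g • φ ⟨r, hr⟩) := by
  simp only [fullOrbitLO_eq_orbit, permLO_toEquiv_eq_smul]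
  refine ⟨fun lt hlt => closure_orbit_subset_of_mem_closure_orbit
    (hop.mem_closure_orbit hhom hfin hlt), fun Y _ _ _ _ _ _ hmin => ?_⟩
  let := uniformSpaceOfCompactR1 (γ := Y)
  obtain ⟨φ, hφc, hφ⟩ := exists_continuous_equivariant_closure_orbit (Y := Y) hfin hohom hramsey
  have : CompactSpace (closure (orbit (M ≃[L] M) prec)) :=
    isCompact_iff_compactSpace.1 isClosed_closure.isCompact
  have : Nonempty (closure (orbit (M ≃[L] M) prec)) :=
    ⟨⟨prec, subset_closure (mem_orbit_self prec)⟩⟩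
  refine ⟨φ, hφc, surjective_of_forall_dense_orbit hmin hφc fun g x => ?_, hφ⟩
  exact ⟨_, hφ g x.1 x.2 (smul_closure_orbit_subset g prec (smul_mem_smul_set x.2))⟩

/-- If `(A, ≺)` is an `ω`-homogeneous linearly ordered structure (over an `ω`-homogeneous `A`)
whose finitely generated substructures are finite and whose age satisfies both the Ramsey
property and the ordering property, then `cl(H·≺) ⊆ LO(A)` is the universal minimal flow of
`H = Aut(A)`: it is a minimal `H`-flow and every minimal `H`-flow is a continuous
`H`-equivariant image of it. -/
theorem orbit_closure_is_universal_minimal_flow (hL : L.card ≤ Cardinal.aleph0)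
    (hhom : L.IsUltrahomogeneous M)
    (hfin : ∀ S : L.Substructure M, S.FG → Finite S)
    (prec : LO M) (hohom : OrdUltrahomogeneous L M prec)
    (hramsey : OrderedAgeRamsey L M prec) (hop : OrderingProperty L M prec) :
    (∀ lt ∈ closure (fullOrbitLO L M prec),
      closure (fullOrbitLO L M prec) ⊆ closure (fullOrbitLO L M lt)) ∧
    (∀ (Y : Type x) [TopologicalSpace Y] [CompactSpace Y] [T2Space Y] [Nonempty Y]
        [MulAction (M ≃[L] M) Y] [ContinuousSMul (M ≃[L] M) Y],
      (∀ y : Y, Dense (MulAction.orbit (M ≃[L] M) y)) →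
      ∃ φ : closure (fullOrbitLO L M prec) → Y,
        Continuous φ ∧ Function.Surjective φ ∧
        ∀ (g : M ≃[L] M) (r : LO M) (hr : r ∈ closure (fullOrbitLO L M prec))
            (hgr : permLO g.toEquiv r ∈ closure (fullOrbitLO L M prec)),
          φ ⟨permLO g.toEquiv r, hgr⟩ = g • φ ⟨r, hr⟩) :=
  orbit_closure_is_universal_minimal_flow_general hhom hfin prec hohom hramsey hop
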